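/- arXiv:2306.04416 — 2 statements merged into one kernel-verified Lean document; each statement's English description precedes it below -/
import Mathlib

section
/- The radial function W(x) = -4·log(1 + |x|²/(8√6)) on ℝ⁴ satisfies the equation Δ²W = e^W, where Δ² denotes the bilaplacian (the Laplacian applied twice). -/
/-!
Write `W x = φ (‖x‖²)` with `φ s = -4 log (1 + s / c)` and `c = 8√6`. For a profile of `‖x‖²` on
`ℝ⁴` each second partial `∂ᵢ²` contributes `2φ'(s) + 4φ''(s) xᵢ²`, so the Laplacian is again a
profile, `8φ'(s) + 4sφ''(s)`. Applying this twice gives `Δ²W = 384c² / (c + s)⁴` for every `c > 0`,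
while `e^W = c⁴ / (c + s)⁴`; the two agree exactly when `c² = 384`.
-/

/-- The Laplacian on ℝ⁴ : sum of second partial derivatives. -/
noncomputable def laplacian (f : EuclideanSpace ℝ (Fin 4) → ℝ)
    (x : EuclideanSpace ℝ (Fin 4)) : ℝ :=
  ∑ i : Fin 4,
    fderiv ℝ (fun y => fderiv ℝ f y (EuclideanSpace.single i 1)) x (EuclideanSpace.single i 1)

/-- The standard bubble `W(x) = -4 log(1 + |x|²/(8√6))` on ℝ⁴. -/
noncomputable def W (x : EuclideanSpace ℝ (Fin 4)) : ℝ :=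
  -4 * Real.log (1 + ‖x‖ ^ 2 / (8 * Real.sqrt 6))

open Real

section Radial

variable {ι : Type*} [Fintype ι] [DecidableEq ι] {φ p q : ℝ → ℝ}

theorem fderiv_comp_norm_sq_apply_single {y : EuclideanSpace ℝ ι} {φ' : ℝ}
    (hφ : HasDerivAt φ φ' (‖y‖ ^ 2)) (i : ι) :
    fderiv ℝ (fun z : EuclideanSpace ℝ ι => φ (‖z‖ ^ 2)) y (EuclideanSpace.single i 1) =
      φ' * (2 * y i) := by
  have h := hφ.comp_hasFDerivAt y (hasStrictFDerivAt_norm_sq y).hasFDerivAt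
  rw [Function.comp_def] at h
  simp [h.fderiv, EuclideanSpace.inner_single_right]

theorem fderiv_fderiv_comp_norm_sq_apply_single
    (hp : ∀ s, 0 ≤ s → HasDerivAt φ (p s) s) (hq : ∀ s, 0 ≤ s → HasDerivAt p (q s) s)
    (x : EuclideanSpace ℝ ι) (i : ι) :
    fderiv ℝ (fun y => fderiv ℝ (fun z : EuclideanSpace ℝ ι => φ (‖z‖ ^ 2)) y
        (EuclideanSpace.single i 1)) x (EuclideanSpace.single i 1) =
      2 * p (‖x‖ ^ 2) + 4 * q (‖x‖ ^ 2) * x i ^ 2 := by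
  simp_rw [fun y => fderiv_comp_norm_sq_apply_single (hp _ (sq_nonneg ‖y‖)) i]
  have hprofile :=
    (hq _ (sq_nonneg ‖x‖)).comp_hasFDerivAt x (hasStrictFDerivAt_norm_sq x).hasFDerivAt
  have hcoord :=
    ((EuclideanSpace.proj i : EuclideanSpace ℝ ι →L[ℝ] ℝ).hasFDerivAt (x := x)).const_mul 2
  rw [Function.comp_def] at hprofile
  have h : HasFDerivAt (fun y : EuclideanSpace ℝ ι => p (‖y‖ ^ 2) * (2 * y i)) _ x :=
    hprofile.mul hcoord
  rw [h.fderiv]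
  simp [EuclideanSpace.inner_single_right]
  ring

end Radial

theorem laplacian_comp_norm_sq {φ p q : ℝ → ℝ}
    (hp : ∀ s, 0 ≤ s → HasDerivAt φ (p s) s) (hq : ∀ s, 0 ≤ s → HasDerivAt p (q s) s)
    (x : EuclideanSpace ℝ (Fin 4)) :
    laplacian (fun z => φ (‖z‖ ^ 2)) x = 8 * p (‖x‖ ^ 2) + 4 * ‖x‖ ^ 2 * q (‖x‖ ^ 2) := by
  have hnorm : ∑ i, x i ^ 2 = ‖x‖ ^ 2 := by simp [EuclideanSpace.norm_sq_eq]
  rw [laplacian, Finset.sum_congr rfl fun i _ => fderiv_fderiv_comp_norm_sq_apply_single hp hq x i,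
    Finset.sum_add_distrib, Finset.sum_const, ← Finset.mul_sum, hnorm]
  simp only [Finset.card_univ, Fintype.card_fin, nsmul_eq_mul]
  ring

theorem hasDerivAt_div_add_pow {c s : ℝ} (a : ℝ) (k : ℕ) (h : c + s ≠ 0) :
    HasDerivAt (fun t => a / (c + t) ^ k) (-(k * a) / (c + s) ^ (k + 1)) s := by
  have := (hasDerivAt_const s a).div (((hasDerivAt_id' s).const_add c).fun_pow k) (pow_ne_zero k h)
  refine this.congr_deriv ?_
  rcases k with _ | k
  · simp
  · field_simp
    push_cast
    ring

section Bubble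

variable {c : ℝ}

theorem hasDerivAt_neg_four_mul_log_one_add_div (hc : 0 < c) {s : ℝ} (hs : 0 ≤ s) :
    HasDerivAt (fun t => -4 * log (1 + t / c)) (-4 / (c + s)) s := by
  have hpos : 0 < 1 + s / c := by positivity
  have := ((((hasDerivAt_id' s).div_const c).const_add 1).log hpos.ne').const_mul (-4)
  refine this.congr_deriv ?_
  field_simp

theorem laplacian_neg_four_mul_log_one_add_div (hc : 0 < c) (x : EuclideanSpace ℝ (Fin 4)) :
    laplacian (fun z => -4 * log (1 + ‖z‖ ^ 2 / c)) x =
      -16 / (c + ‖x‖ ^ 2) - 16 * c / (c + ‖x‖ ^ 2) ^ 2 := by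
  have hp (s : ℝ) (hs : 0 ≤ s) := hasDerivAt_neg_four_mul_log_one_add_div hc hs
  have hq (s : ℝ) (hs : 0 ≤ s) : HasDerivAt (fun t => -4 / (c + t)) (4 / (c + s) ^ 2) s := by
    simpa using hasDerivAt_div_add_pow (-4) 1 (by positivity : c + s ≠ 0)
  rw [laplacian_comp_norm_sq hp hq]
  have : c + ‖x‖ ^ 2 ≠ 0 := by positivity
  field_simp
  ring

theorem laplacian_laplacian_neg_four_mul_log_one_add_div (hc : 0 < c)
    (x : EuclideanSpace ℝ (Fin 4)) :
    laplacian (laplacian (fun z => -4 * log (1 + ‖z‖ ^ 2 / c))) x =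
      384 * c ^ 2 / (c + ‖x‖ ^ 2) ^ 4 := by
  have hp (s : ℝ) (hs : 0 ≤ s) : HasDerivAt (fun t => -16 / (c + t) - 16 * c / (c + t) ^ 2)
      (16 / (c + s) ^ 2 + 32 * c / (c + s) ^ 3) s := by
    have h : c + s ≠ 0 := by positivity
    have h₁ := hasDerivAt_div_add_pow (-16) 1 h
    simp only [pow_one] at h₁
    exact (h₁.sub (hasDerivAt_div_add_pow (16 * c) 2 h)).congr_deriv (by push_cast; ring)
  have hq (s : ℝ) (hs : 0 ≤ s) : HasDerivAt (fun t => 16 / (c + t) ^ 2 + 32 * c / (c + t) ^ 3)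
      (-32 / (c + s) ^ 3 - 96 * c / (c + s) ^ 4) s := by
    have h : c + s ≠ 0 := by positivity
    exact ((hasDerivAt_div_add_pow 16 2 h).add (hasDerivAt_div_add_pow (32 * c) 3 h)).congr_deriv
      (by push_cast; ring)
  rw [funext (laplacian_neg_four_mul_log_one_add_div hc), laplacian_comp_norm_sq hp hq]
  have : c + ‖x‖ ^ 2 ≠ 0 := by positivity
  field_simp
  ring

theorem exp_neg_four_mul_log_one_add_div (hc : 0 < c) {s : ℝ} (hs : 0 ≤ s) :
    exp (-4 * log (1 + s / c)) = c ^ 4 / (c + s) ^ 4 := by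
  have hpos : 0 < 1 + s / c := by positivity
  rw [show -4 * log (1 + s / c) = -((4 : ℕ) * log (1 + s / c)) by push_cast; ring, exp_neg,
    exp_nat_mul, exp_log hpos]
  field_simp

end Bubble

/-- `W` satisfies the fourth order equation `Δ²W = e^W` on ℝ⁴. -/
theorem bilaplacian_of_bubble :
    ∀ x : EuclideanSpace ℝ (Fin 4), laplacian (laplacian W) x = Real.exp (W x) := by
  intro x
  have hc : 0 < 8 * √6 := by positivity
  have hc2 : (8 * √6) ^ 2 = 384 := by rw [mul_pow, sq_sqrt (by norm_num)]; norm_num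
  rw [show W = fun z => -4 * log (1 + ‖z‖ ^ 2 / (8 * √6)) from rfl,
    laplacian_laplacian_neg_four_mul_log_one_add_div hc,
    exp_neg_four_mul_log_one_add_div hc (sq_nonneg _),
    show (8 * √6) ^ 4 = 384 * (8 * √6) ^ 2 by rw [← hc2]; ring]
end

section
/- The integral of e^{W(x)} over ℝ⁴, where W(x) = -4·log(1 + |x|²/(8√6)), equals 64π². -/
open MeasureTheory

/-!
Integrating in polar coordinates, `∫_{ℝ⁴} (1 + |x|²/c)⁻⁴ dx = |S³| ∫₀^∞ r³ (1 + r²/c)⁻⁴ dr`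
with `|S³| = 4 · vol(B⁴) = 2π²`. The radial integral is `c²/12`, read off from the explicit
antiderivative `(c²/2) (t⁻³/3 - t⁻²/2)` in `t = 1 + r²/c`. Hence the integral is `π² c²/6`,
which is `64π²` for `c = 8√6`.
-/

open Real Set Filter Metric Module

section RadialIntegral

variable {c : ℝ}

theorem hasDerivAt_antideriv_pow_three_mul_inv_one_add_sq_div_pow_four (hc : 0 < c) (r : ℝ) :
    HasDerivAt
      (fun r : ℝ => c ^ 2 / 2 * (((1 + r ^ 2 / c) ^ 3)⁻¹ / 3 - ((1 + r ^ 2 / c) ^ 2)⁻¹ / 2))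
      (r ^ 3 * ((1 + r ^ 2 / c) ^ 4)⁻¹) r := by
  have hc0 : c ≠ 0 := hc.ne'
  have ht : 1 + r ^ 2 / c ≠ 0 := by positivity
  have hdt : HasDerivAt (fun r : ℝ => 1 + r ^ 2 / c) (2 * r / c) r := by
    simpa using ((hasDerivAt_pow 2 r).div_const c).const_add 1
  refine (((((hdt.fun_pow 3).inv (pow_ne_zero 3 ht)).div_const 3).sub
    (((hdt.fun_pow 2).inv (pow_ne_zero 2 ht)).div_const 2)).const_mul (c ^ 2 / 2)).congr_deriv ?_
  norm_num
  field_simp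
  ring

theorem integral_Ioi_pow_three_mul_inv_one_add_sq_div_pow_four (hc : 0 < c) :
    ∫ r in Ioi (0 : ℝ), r ^ 3 * ((1 + r ^ 2 / c) ^ 4)⁻¹ = c ^ 2 / 12 := by
  have ht : Tendsto (fun r : ℝ => 1 + r ^ 2 / c) atTop atTop :=
    tendsto_atTop_add_const_left _ _ ((tendsto_pow_atTop two_ne_zero).atTop_div_const hc)
  have hlim : Tendsto (fun r : ℝ => c ^ 2 / 2 *
      (((1 + r ^ 2 / c) ^ 3)⁻¹ / 3 - ((1 + r ^ 2 / c) ^ 2)⁻¹ / 2)) atTop (nhds 0) := by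
    simpa using ((((tendsto_pow_atTop three_ne_zero).comp ht).inv_tendsto_atTop.div_const 3).sub
      (((tendsto_pow_atTop two_ne_zero).comp ht).inv_tendsto_atTop.div_const 2)).const_mul
        (c ^ 2 / 2)
  have hderiv := hasDerivAt_antideriv_pow_three_mul_inv_one_add_sq_div_pow_four hc
  rw [integral_Ioi_of_hasDerivAt_of_nonneg (hderiv 0).continuousAt.continuousWithinAt
    (fun r _ => hderiv r) (fun r (hr : 0 < r) => by positivity) hlim]
  ring

end RadialIntegral

section FourDimensional

variable {E : Type*} [NormedAddCommGroup E] [InnerProductSpace ℝ E] [FiniteDimensional ℝ E]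
  [MeasurableSpace E] [BorelSpace E]

theorem InnerProductSpace.volume_real_ball_zero_one_of_finrank_eq_four
    (hE : finrank ℝ E = 4) : volume.real (ball (0 : E) 1) = π ^ 2 / 2 := by
  have : Nontrivial E := Module.nontrivial_of_finrank_pos (R := ℝ) (by omega)
  rw [measureReal_def, InnerProductSpace.volume_ball_of_dim_even (k := 2) (by omega)]
  simp only [ENNReal.ofReal_one, one_pow, one_mul, Nat.factorial_two, Nat.cast_ofNat]
  exact ENNReal.toReal_ofReal (by positivity)

theorem integral_inv_one_add_sq_norm_div_pow_four (hE : finrank ℝ E = 4) {c : ℝ} (hc : 0 < c) :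
    ∫ x : E, ((1 + ‖x‖ ^ 2 / c) ^ 4)⁻¹ = π ^ 2 * c ^ 2 / 6 := by
  have : Nontrivial E := Module.nontrivial_of_finrank_pos (R := ℝ) (by omega)
  rw [integral_fun_norm_addHaar volume (fun r => ((1 + r ^ 2 / c) ^ 4)⁻¹),
    InnerProductSpace.volume_real_ball_zero_one_of_finrank_eq_four hE, hE]
  simp only [nsmul_eq_mul, smul_eq_mul, Nat.add_one_sub_one]
  rw [integral_Ioi_pow_three_mul_inv_one_add_sq_div_pow_four hc]
  ring

end FourDimensional

theorem exp_W (x : EuclideanSpace ℝ (Fin 4)) :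
    exp (W x) = ((1 + ‖x‖ ^ 2 / (8 * √6)) ^ 4)⁻¹ := by
  have ht : 0 < 1 + ‖x‖ ^ 2 / (8 * √6) := by positivity
  rw [W, ← exp_log (pow_pos ht 4), ← exp_neg, Real.log_pow]
  push_cast
  ring_nf

/-- The total integral of `e^W` over ℝ⁴ equals `64π²`. -/
theorem integral_exp_bubble :
    ∫ x : EuclideanSpace ℝ (Fin 4), Real.exp (W x) = 64 * Real.pi ^ 2 := by
  simp_rw [exp_W]
  rw [integral_inv_one_add_sq_norm_div_pow_four finrank_euclideanSpace_fin (by positivity),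
    mul_pow, sq_sqrt (by norm_num)]
  ring
end
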